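/- arXiv:0802.0789 — 3 statements merged into one kernel-verified Lean document; each statement's English description precedes it below -/
import Mathlib

section
/- Let b : ℂ₊ → ℂ be analytic with |b| ≤ 1, let z₀ ∈ ℂ₊, and set a_j = b^{(j)}(z₀)/j!. For ℓ ≥ 1 define k_{z₀}^b(z) = (1 − conj(b(z₀))·b(z))/(z − conj(z₀)) and k_{z₀,ℓ}^b(z) = (1 − b(z)·Σ_{j=0}^ℓ conj(a_j)(z − conj(z₀))^j)/(z − conj(z₀))^{ℓ+1}. Then for all z ∈ ℂ₊ with z ≠ conj(z₀): (k_{z₀}^b(z))^{ℓ+1} = (1 − conj(b(z₀))·b(z))^ℓ · k_{z₀,ℓ}^b(z) + b(z) · Σ_{j=1}^ℓ conj(a_j) · (1 − conj(b(z₀))·b(z))^{j−1} · (k_{z₀}^b(z))^{ℓ+1−j}. -/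
open Complex Finset

/-! Writing `A = 1 - conj (b z₀) * b z` and `D = z - conj z₀`, every summand
`conj aⱼ * A ^ (j - 1) * (A / D) ^ (ℓ + 1 - j)` equals `conj aⱼ * Dʲ * A ^ ℓ / D ^ (ℓ + 1)`.
After multiplying by `D ^ (ℓ + 1)` the terms with `j ≥ 1` cancel against the tail of the
Taylor sum, and what remains is `A ^ (ℓ + 1) = A ^ ℓ * (1 - b z * conj a₀)`, true because
`a₀ = b z₀`. -/

lemma pow_pred_mul_div_pow_sub {K : Type*} [Field K] {A D : K} (hD : D ≠ 0) {j n : ℕ}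
    (hj : 1 ≤ j) (hjn : j ≤ n) :
    A ^ (j - 1) * (A / D) ^ (n - j) = A ^ (n - 1) * D ^ j / D ^ n := by
  have hA : A ^ (n - 1) = A ^ (j - 1) * A ^ (n - j) := by rw [← pow_add]; congr 1; omega
  have hD' : D ^ n = D ^ j * D ^ (n - j) := by rw [← pow_add]; congr 1; omega
  rw [hA, hD', div_pow]
  field_simp

lemma sum_range_succ_eq_add_sum_Icc {M : Type*} [AddCommMonoid M] (f : ℕ → M) (n : ℕ) :
    ∑ j ∈ range (n + 1), f j = f 0 + ∑ j ∈ Icc 1 n, f j := by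
  rw [range_eq_Ico, sum_eq_sum_Ico_succ_bot (Nat.succ_pos n)]
  rfl

theorem div_pow_succ_eq_mul_taylor_kernel_add_sum {K : Type*} [Field K] (c : ℕ → K) (x D : K)
    (hD : D ≠ 0) (ℓ : ℕ) :
    ((1 - c 0 * x) / D) ^ (ℓ + 1) =
      (1 - c 0 * x) ^ ℓ * ((1 - x * ∑ j ∈ range (ℓ + 1), c j * D ^ j) / D ^ (ℓ + 1)) +
      x * ∑ j ∈ Icc 1 ℓ, c j * (1 - c 0 * x) ^ (j - 1) * ((1 - c 0 * x) / D) ^ (ℓ + 1 - j) := by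
  set A := 1 - c 0 * x
  have hterm : ∀ j ∈ Icc 1 ℓ, c j * A ^ (j - 1) * (A / D) ^ (ℓ + 1 - j) =
      A ^ ℓ * (c j * D ^ j) / D ^ (ℓ + 1) := by
    intro j hj
    obtain ⟨hj1, hjℓ⟩ := mem_Icc.mp hj
    rw [mul_assoc, pow_pred_mul_div_pow_sub hD hj1 (by omega), Nat.add_sub_cancel]
    ring
  rw [sum_congr rfl hterm, ← sum_div, ← mul_sum, sum_range_succ_eq_add_sum_Icc, pow_zero,
    mul_one, div_pow]
  field_simp
  ring

theorem stmt_8_general (b : ℂ → ℂ)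
    (z₀ : ℂ)
    (a : ℕ → ℂ) (ha : ∀ j, a j = iteratedDeriv j b z₀ / (j.factorial : ℂ))
    (ℓ : ℕ)
    (z : ℂ) (hzz₀ : z ≠ (starRingEnd ℂ) z₀) :
    ((1 - (starRingEnd ℂ) (b z₀) * b z) / (z - (starRingEnd ℂ) z₀))^(ℓ+1) =
      (1 - (starRingEnd ℂ) (b z₀) * b z)^ℓ *
        ((1 - b z * ∑ j ∈ range (ℓ+1), (starRingEnd ℂ) (a j) * (z - (starRingEnd ℂ) z₀)^j) /
          (z - (starRingEnd ℂ) z₀)^(ℓ+1)) +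
      b z * ∑ j ∈ Icc 1 ℓ, (starRingEnd ℂ) (a j) *
        (1 - (starRingEnd ℂ) (b z₀) * b z)^(j-1) *
        ((1 - (starRingEnd ℂ) (b z₀) * b z) / (z - (starRingEnd ℂ) z₀))^(ℓ+1-j) := by
  have ha₀ : a 0 = b z₀ := by simp [ha]
  have h := div_pow_succ_eq_mul_taylor_kernel_add_sum (fun j => (starRingEnd ℂ) (a j)) (b z)
    _ (sub_ne_zero.mpr hzz₀) ℓ
  simpa only [ha₀] using h

/-- the recurrence relation between `(k_{z₀}^b)^{ℓ+1}` and the kernels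
`k_{z₀,ℓ}^b`. -/
theorem stmt_8 (b : ℂ → ℂ)
    (hb_an : DifferentiableOn ℂ b {w : ℂ | 0 < w.im})
    (hb_bdd : ∀ w : ℂ, 0 < w.im → ‖b w‖ ≤ 1)
    (z₀ : ℂ) (hz₀ : 0 < z₀.im)
    (a : ℕ → ℂ) (ha : ∀ j, a j = iteratedDeriv j b z₀ / (j.factorial : ℂ))
    (ℓ : ℕ) (hℓ : 1 ≤ ℓ)
    (z : ℂ) (hz : 0 < z.im) (hzz₀ : z ≠ (starRingEnd ℂ) z₀) :
    ((1 - (starRingEnd ℂ) (b z₀) * b z) / (z - (starRingEnd ℂ) z₀))^(ℓ+1) =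
      (1 - (starRingEnd ℂ) (b z₀) * b z)^ℓ *
        ((1 - b z * ∑ j ∈ range (ℓ+1), (starRingEnd ℂ) (a j) * (z - (starRingEnd ℂ) z₀)^j) /
          (z - (starRingEnd ℂ) z₀)^(ℓ+1)) +
      b z * ∑ j ∈ Icc 1 ℓ, (starRingEnd ℂ) (a j) *
        (1 - (starRingEnd ℂ) (b z₀) * b z)^(j-1) *
        ((1 - (starRingEnd ℂ) (b z₀) * b z) / (z - (starRingEnd ℂ) z₀))^(ℓ+1-j) :=
  stmt_8_general b z₀ a ha ℓ z hzz₀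
end

section
/- Let b be an outer function in the unit ball of H^∞(ℂ₊), let x ∈ ℝ with d₀ := dist(x, σ(b)) > 0 (so |b(t)| = 1 for a.e. t with |t − x| < d₀), and let 0 < y < d₀. Define |b'(x)| := (1/π) ∫_ℝ |log|b(t)||/|t − x|² dt. Then |b(x + iy)| ≤ exp(−y·|b'(x)|/4). -/
/-!
On the boundary `L = log|b| ≤ 0`, so `log|b(x+iy)|` is `-(y/π)` times the Poisson-type integral
`∫ |L t| / ((t-x)² + y²)`. Where `L t ≠ 0` we have `y ≤ d₀ ≤ |t - x|`, hence
`(t-x)² + y² ≤ 2 (t-x)²`, and that integral is at least half of `∫ |L t| / (t-x)²`.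
This gives `|b(x+iy)| ≤ exp(-y|b'(x)|/2)`, which is stronger than the bound claimed.
-/

open MeasureTheory Real

lemma norm_ofReal_sub_sq (t x y : ℝ) :
    ‖(t : ℂ) - ((x : ℂ) + (y : ℂ) * Complex.I)‖ ^ 2 = (t - x) ^ 2 + y ^ 2 := by
  rw [Complex.sq_norm, Complex.normSq_apply]
  simp only [Complex.sub_re, Complex.sub_im, Complex.add_re, Complex.add_im, Complex.ofReal_re,
    Complex.ofReal_im, Complex.mul_re, Complex.mul_im, Complex.I_re, Complex.I_im]
  ring

lemma abs_div_sq_le_two_mul_abs_div_sq_add_sq (l : ℝ) {s y : ℝ} (h : l = 0 ∨ |y| ≤ |s|) :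
    |l| / s ^ 2 ≤ 2 * (|l| / (s ^ 2 + y ^ 2)) := by
  rcases h with rfl | hys
  · simp
  rcases eq_or_ne s 0 with rfl | hs
  · simp only [ne_eq, OfNat.ofNat_ne_zero, not_false_eq_true, zero_pow, div_zero]
    positivity
  have hy2 : y ^ 2 ≤ s ^ 2 := sq_le_sq.mpr hys
  rw [mul_div_assoc', le_div_iff₀ (by positivity), div_mul_eq_mul_div,
    div_le_iff₀ (by positivity)]
  nlinarith [abs_nonneg l]

section PoissonIntegral

variable {L : ℝ → ℝ} {x : ℝ}

lemma integrable_abs_div_sq_add_sq (hL : Integrable (fun t => |L t| / (t - x) ^ 2)) (y : ℝ) :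
    Integrable (fun t => |L t| / ((t - x) ^ 2 + y ^ 2)) := by
  have hmeas : Measurable (fun t : ℝ => (t - x) ^ 2 / ((t - x) ^ 2 + y ^ 2)) := by fun_prop
  refine hL.mono' ?_ ?_
  · refine (hL.aestronglyMeasurable.mul hmeas.aestronglyMeasurable).congr ?_
    filter_upwards [Measure.ae_ne volume x] with t ht
    have : (t - x) ^ 2 ≠ 0 := pow_ne_zero 2 (sub_ne_zero.mpr ht)
    simp only [Pi.mul_apply]
    rw [div_mul_div_comm, mul_comm, mul_div_mul_left _ _ this]
  · filter_upwards [Measure.ae_ne volume x] with t ht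
    have : 0 < (t - x) ^ 2 := sq_pos_of_ne_zero (sub_ne_zero.mpr ht)
    rw [Real.norm_eq_abs, abs_of_nonneg (by positivity)]
    gcongr
    exact le_add_of_nonneg_right (sq_nonneg y)

lemma integral_abs_div_sq_le_two_mul {d y : ℝ} (hL : Integrable (fun t => |L t| / (t - x) ^ 2))
    (hvanish : ∀ᵐ t : ℝ, |t - x| < d → L t = 0) (hyd : |y| ≤ d) :
    ∫ t, |L t| / (t - x) ^ 2 ≤ 2 * ∫ t, |L t| / ((t - x) ^ 2 + y ^ 2) := by
  rw [← integral_const_mul]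
  refine integral_mono_ae hL ((integrable_abs_div_sq_add_sq hL y).const_mul 2) ?_
  filter_upwards [hvanish] with t ht
  refine abs_div_sq_le_two_mul_abs_div_sq_add_sq _ ?_
  by_cases hd : |t - x| < d
  · exact Or.inl (ht hd)
  · exact Or.inr (hyd.trans (not_lt.mp hd))

lemma integral_div_sq_add_sq_of_nonpos (hL : ∀ᵐ t : ℝ, L t ≤ 0) (y : ℝ) :
    ∫ t, L t / ((t - x) ^ 2 + y ^ 2) = -∫ t, |L t| / ((t - x) ^ 2 + y ^ 2) := by
  rw [← integral_neg]
  refine integral_congr_ae ?_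
  filter_upwards [hL] with t ht
  rw [abs_of_nonpos ht, neg_div, neg_neg]

end PoissonIntegral

theorem stmt_14_general (b : ℂ → ℂ) (L : ℝ → ℝ)
    (hL_nonpos : ∀ᵐ t : ℝ, L t ≤ 0)
    (x d₀ : ℝ)
    (hL_vanish : ∀ᵐ t : ℝ, |t - x| < d₀ → L t = 0)
    (houter : ∀ z : ℂ, 0 < z.im → Real.log ‖b z‖ =
      (z.im / π) * ∫ t : ℝ, L t / ‖(t : ℂ) - z‖^2)
    (hL_int : Integrable (fun t : ℝ => |L t| / (t - x)^2))
    (y : ℝ) (hy0 : 0 < y) (hyd : y < d₀) :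
    ‖b ((x : ℂ) + (y : ℂ) * Complex.I)‖ ≤
      Real.exp (-(y * ((1 / π) * ∫ t : ℝ, |L t| / (t - x)^2)) / 4) := by
  set A := ∫ t : ℝ, |L t| / (t - x) ^ 2
  have hzim : ((x : ℂ) + (y : ℂ) * Complex.I).im = y := by simp
  have hlog : Real.log ‖b ((x : ℂ) + (y : ℂ) * Complex.I)‖ =
      -(y / π) * ∫ t, |L t| / ((t - x) ^ 2 + y ^ 2) := by
    rw [houter _ (by rwa [hzim]), hzim]
    simp_rw [norm_ofReal_sub_sq, integral_div_sq_add_sq_of_nonpos hL_nonpos, mul_neg, neg_mul]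
  have hAP : A ≤ 2 * ∫ t, |L t| / ((t - x) ^ 2 + y ^ 2) :=
    integral_abs_div_sq_le_two_mul hL_int hL_vanish ((abs_of_pos hy0).trans_le hyd.le)
  have hA : 0 ≤ A := integral_nonneg fun t => by positivity
  have hyπ : 0 ≤ y / π := div_nonneg hy0.le pi_pos.le
  refine (le_exp_log _).trans (exp_le_exp.mpr ?_)
  rw [hlog, show y * (1 / π * A) = y / π * A by ring]
  linarith [mul_le_mul_of_nonneg_left hAP hyπ, mul_nonneg hyπ hA]

/-- for an outer function `b` with boundary log-modulus `L` vanishing near `x`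
(distance `d₀` to the spectrum), one has `|b(x+iy)| ≤ exp(-y|b'(x)|/4)` for `0 < y < d₀`,
where `|b'(x)| = (1/π) ∫ |L t|/|t-x|² dt`. -/
theorem stmt_14 (b : ℂ → ℂ) (L : ℝ → ℝ)
    (hL_nonpos : ∀ᵐ t : ℝ, L t ≤ 0)
    (x d₀ : ℝ) (hd₀ : 0 < d₀)
    (hL_vanish : ∀ᵐ t : ℝ, |t - x| < d₀ → L t = 0)
    (houter : ∀ z : ℂ, 0 < z.im → Real.log ‖b z‖ =
      (z.im / π) * ∫ t : ℝ, L t / ‖(t : ℂ) - z‖^2)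
    (hL_int : Integrable (fun t : ℝ => |L t| / (t - x)^2))
    (y : ℝ) (hy0 : 0 < y) (hyd : y < d₀) :
    ‖b ((x : ℂ) + (y : ℂ) * Complex.I)‖ ≤
      Real.exp (-(y * ((1 / π) * ∫ t : ℝ, |L t| / (t - x)^2)) / 4) :=
  stmt_14_general b L hL_nonpos x d₀ hL_vanish houter hL_int y hy0 hyd
end

section
/- Let (λ_n) be a sequence in the upper half-plane satisfying the Carleson condition inf_k ∏_{n ≠ k} |(λ_n − λ_k)/(λ_n − conj(λ_k))| > 0. Then the measure ν = Σ_n Im(λ_n)·δ_{λ_n} is a Carleson measure: there is C > 0 with Σ_{λ_n ∈ S(x,h)} Im(λ_n) ≤ C·h for every square S(x,h) = [x, x+h] × [0, h], x ∈ ℝ, h > 0. -/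
/-!
Write `ρ(z, w) = |(z - w) / (z - w̄)|` for the pseudo-hyperbolic distance of the upper half-plane,
so that `1 - ρ(z, w)² = 4 Im z Im w / |z - w̄|²`. If every product `∏_{n ≠ k} ρ(λₙ, λₖ)` is at
least `δ > 0`, then `1 - t² ≤ -2 log t` gives `∑_{n ≠ k} (1 - ρ(λₙ, λₖ)²) ≤ M := -2 log δ` for
every `k`. In particular the points within horizontal distance `a Im λₖ` of `λₖ` and no higher
than `λₖ` have total height at most `(a² + 4) M Im λₖ / 4`.

The box estimate then follows by strong induction on the finite set of points in a box: take the
highest point `λₖ` of the box; the vertical strip `|Re z - Re λₖ| ≤ 3 Im λₖ` contributes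
`O(Im λₖ)`, and what lies left and right of this strip sits in two narrower boxes whose widths add
up to `h - 6 Im λₖ`. A side box narrower than `Im λₖ` stays within horizontal distance
`4 Im λₖ` of `λₖ`, so it also contributes `O(Im λₖ)`; a wider one contains all its points and
the induction hypothesis applies to it. The constant `C = 1 + 14 M` is what the case of two narrow
side boxes needs: there the total is at most `(1 + 13 M / 4 + 10 M) Im λₖ`.
-/

open Finset Complex ComplexConjugate

lemma tprod_le_prod_of_nonneg_of_le_one {ι : Type*} {f : ι → ℝ} (h0 : ∀ i, 0 ≤ f i)
    (h1 : ∀ i, f i ≤ 1) (s : Finset ι) : ∏' i, f i ≤ ∏ i ∈ s, f i := by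
  have hbdd : BddBelow (Set.range fun s : Finset ι ↦ ∏ i ∈ s, f i) :=
    ⟨0, by rintro _ ⟨s, rfl⟩; exact prod_nonneg fun i _ ↦ h0 i⟩
  have hprod : HasProd f (⨅ s : Finset ι, ∏ i ∈ s, f i) :=
    tendsto_atTop_ciInf (prod_anti_set_of_le_one h0 h1) hbdd
  rw [hprod.tprod_eq]
  exact ciInf_le hbdd s

lemma sum_one_sub_sq_le_neg_two_log {ι : Type*} {g : ι → ℝ} {s : Finset ι} {δ : ℝ}
    (hδ : 0 < δ) (h0 : ∀ i ∈ s, 0 ≤ g i) (hprod : δ ≤ ∏ i ∈ s, g i) :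
    ∑ i ∈ s, (1 - g i ^ 2) ≤ -2 * Real.log δ := by
  have hpos : ∀ i ∈ s, 0 < g i := by
    intro i hi
    refine (h0 i hi).lt_of_ne fun hzero ↦ ?_
    have : ∏ j ∈ s, g j = 0 := prod_eq_zero hi hzero.symm
    linarith
  calc ∑ i ∈ s, (1 - g i ^ 2)
      ≤ ∑ i ∈ s, -2 * Real.log (g i) := by
        refine sum_le_sum fun i hi ↦ ?_
        nlinarith [Real.log_le_sub_one_of_pos (hpos i hi), sq_nonneg (g i - 1)]
    _ = -2 * Real.log (∏ i ∈ s, g i) := by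
        rw [Real.log_prod fun i hi ↦ (hpos i hi).ne', mul_sum]
    _ ≤ -2 * Real.log δ := by
        have := Real.log_le_log hδ hprod
        linarith

noncomputable def pseudoHyperbolicDist (z w : ℂ) : ℝ := ‖(z - w) / (z - conj w)‖

lemma pseudoHyperbolicDist_nonneg (z w : ℂ) : 0 ≤ pseudoHyperbolicDist z w := norm_nonneg _

lemma normSq_sub_conj (z w : ℂ) :
    normSq (z - conj w) = (z.re - w.re) ^ 2 + (z.im + w.im) ^ 2 := by
  simp only [normSq_apply, sub_re, sub_im, conj_re, conj_im]
  ring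

lemma one_sub_pseudoHyperbolicDist_sq {z w : ℂ} (hz : 0 < z.im) (hw : 0 < w.im) :
    1 - pseudoHyperbolicDist z w ^ 2 = 4 * z.im * w.im / normSq (z - conj w) := by
  have hne : normSq (z - conj w) ≠ 0 := by rw [normSq_sub_conj]; positivity
  rw [pseudoHyperbolicDist, norm_div, div_pow, Complex.sq_norm, Complex.sq_norm, one_sub_div hne,
    normSq_sub_conj]
  simp only [normSq_apply, sub_re, sub_im]
  ring

lemma pseudoHyperbolicDist_le_one {z w : ℂ} (hz : 0 < z.im) (hw : 0 < w.im) :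
    pseudoHyperbolicDist z w ≤ 1 := by
  have hnonneg : 0 ≤ 1 - pseudoHyperbolicDist z w ^ 2 := by
    rw [one_sub_pseudoHyperbolicDist_sq hz hw]
    exact div_nonneg (by positivity) (normSq_nonneg _)
  exact (sq_le_one_iff₀ (pseudoHyperbolicDist_nonneg z w)).1 (by linarith)

def HasPseudoHyperbolicSumBound {ι : Type*} (z : ι → ℂ) (M : ℝ) : Prop :=
  ∀ k (T : Finset ι), k ∉ T → ∑ n ∈ T, (1 - pseudoHyperbolicDist (z n) (z k) ^ 2) ≤ M

lemma hasPseudoHyperbolicSumBound_of_le_tprod {ι : Type*} [DecidableEq ι] {z : ι → ℂ}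
    (hpos : ∀ n, 0 < (z n).im) {δ : ℝ} (hδ : 0 < δ)
    (hprod : ∀ k, δ ≤ ∏' n, if n = k then 1 else pseudoHyperbolicDist (z n) (z k)) :
    HasPseudoHyperbolicSumBound z (-2 * Real.log δ) := by
  intro k T hkT
  set f : ι → ℝ := fun n ↦ if n = k then 1 else pseudoHyperbolicDist (z n) (z k)
  have hf0 : ∀ n, 0 ≤ f n := fun n ↦ by
    dsimp only [f]; split_ifs
    exacts [zero_le_one, pseudoHyperbolicDist_nonneg _ _]
  have hf1 : ∀ n, f n ≤ 1 := fun n ↦ by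
    dsimp only [f]; split_ifs
    exacts [le_rfl, pseudoHyperbolicDist_le_one (hpos n) (hpos k)]
  have hfT : ∀ n ∈ T, f n = pseudoHyperbolicDist (z n) (z k) :=
    fun n hn ↦ if_neg (ne_of_mem_of_not_mem hn hkT)
  have := sum_one_sub_sq_le_neg_two_log hδ (fun n _ ↦ hf0 n)
    ((hprod k).trans (tprod_le_prod_of_nonneg_of_le_one hf0 hf1 T))
  rwa [sum_congr rfl fun n hn ↦ by rw [hfT n hn]] at this

section HasPseudoHyperbolicSumBound

variable {ι : Type*} {z : ι → ℂ} {M : ℝ}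

lemma HasPseudoHyperbolicSumBound.sum_im_le (hpos : ∀ n, 0 < (z n).im)
    (hsep : HasPseudoHyperbolicSumBound z M) {T : Finset ι} {k : ι} (hkT : k ∉ T) {a : ℝ}
    (hre : ∀ n ∈ T, |(z n).re - (z k).re| ≤ a * (z k).im)
    (him : ∀ n ∈ T, (z n).im ≤ (z k).im) :
    ∑ n ∈ T, (z n).im ≤ (a ^ 2 + 4) * M * (z k).im / 4 := by
  set y := (z k).im
  have hy : 0 < y := hpos k
  have hterm : ∀ n ∈ T, 4 * (z n).im / ((a ^ 2 + 4) * y) ≤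
      1 - pseudoHyperbolicDist (z n) (z k) ^ 2 := by
    intro n hn
    rw [one_sub_pseudoHyperbolicDist_sq (hpos n) hy]
    have hnormSq : normSq (z n - conj (z k)) ≤ (a ^ 2 + 4) * y ^ 2 := by
      have habs := sq_le_sq' (abs_le.1 (hre n hn)).1 (abs_le.1 (hre n hn)).2
      rw [normSq_sub_conj]
      nlinarith [him n hn, (hpos n).le]
    calc 4 * (z n).im / ((a ^ 2 + 4) * y) = 4 * (z n).im * y / ((a ^ 2 + 4) * y ^ 2) := by
          field_simp
      _ ≤ 4 * (z n).im * y / normSq (z n - conj (z k)) := by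
          have := hpos n
          gcongr
          rw [normSq_sub_conj]; positivity
  have hsum : 4 * (∑ n ∈ T, (z n).im) / ((a ^ 2 + 4) * y) ≤ M := by
    rw [mul_sum, sum_div]
    exact (sum_le_sum hterm).trans (hsep k T hkT)
  rw [div_le_iff₀ (by positivity)] at hsum
  linarith

lemma HasPseudoHyperbolicSumBound.sum_im_le_add (hpos : ∀ n, 0 < (z n).im)
    (hsep : HasPseudoHyperbolicSumBound z M) {T : Finset ι} {k : ι} (hkT : k ∈ T) {a : ℝ}
    (hre : ∀ n ∈ T, |(z n).re - (z k).re| ≤ a * (z k).im)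
    (him : ∀ n ∈ T, (z n).im ≤ (z k).im) :
    ∑ n ∈ T, (z n).im ≤ (z k).im + (a ^ 2 + 4) * M * (z k).im / 4 := by
  classical
  rw [← add_sum_erase _ _ hkT]
  exact add_le_add_right (hsep.sum_im_le hpos (notMem_erase k T)
    (fun n hn ↦ hre n (mem_of_mem_erase hn)) fun n hn ↦ him n (mem_of_mem_erase hn)) _

def carlesonBox (x h : ℝ) : Set ℂ := {z | z.re ∈ Set.Icc x (x + h) ∧ z.im ∈ Set.Icc 0 h}

lemma HasPseudoHyperbolicSumBound.sum_im_le_of_mem_strip (hpos : ∀ n, 0 < (z n).im)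
    (hsep : HasPseudoHyperbolicSumBound z M) {S : Finset ι} {k : ι} (hkS : k ∉ S) {a w C : ℝ}
    (hS : ∀ n ∈ S, (z n).re ∈ Set.Icc a (a + w) ∧ (z n).im ≤ (z k).im)
    (hdist : ∀ n ∈ S, |(z n).re - (z k).re| ≤ w + 3 * (z k).im)
    (hind : 0 ≤ w → (∀ n ∈ S, z n ∈ carlesonBox a w) → ∑ n ∈ S, (z n).im ≤ C * w) :
    ∑ n ∈ S, (z n).im ≤ max (C * w) (5 * M * (z k).im) := by
  by_cases hw : (z k).im ≤ w
  · refine le_max_of_le_left (hind ((hpos k).le.trans hw) fun n hn ↦ ?_)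
    obtain ⟨hre, him⟩ := hS n hn
    exact ⟨hre, (hpos n).le, him.trans hw⟩
  · refine le_max_of_le_right ?_
    have := hsep.sum_im_le hpos hkS (a := 4)
      (fun n hn ↦ (hdist n hn).trans (by linarith)) (fun n hn ↦ (hS n hn).2)
    linarith

lemma sum_filter_abs_sub_le_add_sum_filter_lt_add_sum_filter_gt (F : Finset ι)
    (f g : ι → ℝ) (c : ℝ) {r : ℝ} (hr : 0 ≤ r) :
    ∑ n ∈ F with |g n - c| ≤ r, f n + ∑ n ∈ F with g n < c - r, f n
      + ∑ n ∈ F with c + r < g n, f n = ∑ n ∈ F, f n := by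
  classical
  rw [sum_filter, sum_filter, sum_filter, ← sum_add_distrib, ← sum_add_distrib]
  refine sum_congr rfl fun n _ ↦ ?_
  simp only [abs_le]
  split_ifs <;> grind

theorem HasPseudoHyperbolicSumBound.sum_im_le_of_forall_mem_carlesonBox
    (hpos : ∀ n, 0 < (z n).im) (hM : 0 ≤ M) (hsep : HasPseudoHyperbolicSumBound z M)
    (F : Finset ι) {x h : ℝ} (hh : 0 ≤ h) (hF : ∀ n ∈ F, z n ∈ carlesonBox x h) :
    ∑ n ∈ F, (z n).im ≤ (1 + 14 * M) * h := by
  classical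
  induction F using Finset.strongInduction generalizing x h with
  | H F ih => ?_
  rcases F.eq_empty_or_nonempty with rfl | hne
  · rw [sum_empty]; positivity
  obtain ⟨k, hkF, hmax⟩ := F.exists_max_image (fun n ↦ (z n).im) hne
  set y := (z k).im
  have hy : 0 < y := hpos k
  obtain ⟨⟨hxk, hkx⟩, -, hyh⟩ := hF k hkF
  have hre : ∀ n ∈ F, x ≤ (z n).re ∧ (z n).re ≤ x + h := fun n hn ↦ (hF n hn).1
  have hmid : ∑ n ∈ F with |(z n).re - (z k).re| ≤ 3 * y, (z n).im ≤ y + 13 * M * y / 4 := by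
    have := hsep.sum_im_le_add hpos (a := 3)
      (mem_filter.2 ⟨hkF, by rw [sub_self, abs_zero]; positivity⟩)
      (fun n hn ↦ (mem_filter.1 hn).2) (fun n hn ↦ hmax n (mem_filter.1 hn).1)
    linarith
  have hleft : ∑ n ∈ F with (z n).re < (z k).re - 3 * y, (z n).im ≤
      max ((1 + 14 * M) * ((z k).re - 3 * y - x)) (5 * M * y) := by
    refine hsep.sum_im_le_of_mem_strip hpos (a := x)
      (by simp only [mem_filter]; intro h; linarith) (fun n hn ↦ ?_) (fun n hn ↦ ?_)
      fun hw hS ↦ ih _ (filter_ssubset.2 ⟨k, hkF, by linarith⟩) hw hS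
    all_goals obtain ⟨hnF, hlt⟩ := mem_filter.1 hn
    · exact ⟨⟨(hre n hnF).1, by linarith⟩, hmax n hnF⟩
    · rw [abs_le]; constructor <;> linarith [(hre n hnF).1]
  have hright : ∑ n ∈ F with (z k).re + 3 * y < (z n).re, (z n).im ≤
      max ((1 + 14 * M) * (x + h - (z k).re - 3 * y)) (5 * M * y) := by
    refine hsep.sum_im_le_of_mem_strip hpos (a := (z k).re + 3 * y)
      (by simp only [mem_filter]; intro h; linarith) (fun n hn ↦ ?_) (fun n hn ↦ ?_)
      fun hw hS ↦ ih _ (filter_ssubset.2 ⟨k, hkF, by linarith⟩) hw hS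
    all_goals obtain ⟨hnF, hlt⟩ := mem_filter.1 hn
    · exact ⟨⟨hlt.le, by linarith [(hre n hnF).2]⟩, hmax n hnF⟩
    · rw [abs_le]; constructor <;> linarith [(hre n hnF).2]
  rw [← sum_filter_abs_sub_le_add_sum_filter_lt_add_sum_filter_gt F (fun n ↦ (z n).im)
    (fun n ↦ (z n).re) (z k).re (by positivity : 0 ≤ 3 * y)]
  have hMy : 0 ≤ M * y := by positivity
  rcases max_cases ((1 + 14 * M) * ((z k).re - 3 * y - x)) (5 * M * y) with ⟨hl, -⟩ | ⟨hl, -⟩ <;>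
  rcases max_cases ((1 + 14 * M) * (x + h - (z k).re - 3 * y)) (5 * M * y) with ⟨hr, -⟩ | ⟨hr, -⟩ <;>
  rw [hl] at hleft <;> rw [hr] at hright <;> nlinarith

end HasPseudoHyperbolicSumBound

/-- a Carleson (separated) sequence in the upper half-plane induces a
Carleson measure `ν = Σ Im(λ_n) δ_{λ_n}`. -/
theorem stmt_19 (lam : ℕ → ℂ) (h_up : ∀ n, 0 < (lam n).im)
    (h_carleson : 0 < ⨅ k : ℕ, ∏' n : ℕ,
      (if n = k then 1 else
        ‖(lam n - lam k) / (lam n - (starRingEnd ℂ) (lam k))‖)) :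
    ∃ C : ℝ, 0 < C ∧ ∀ x h : ℝ, 0 < h →
      (∑' n : ℕ,
          (if (lam n).re ∈ Set.Icc x (x + h) ∧ (lam n).im ∈ Set.Icc 0 h
            then ENNReal.ofReal ((lam n).im) else 0)) ≤ ENNReal.ofReal (C * h) := by
  set δ := ⨅ k : ℕ, ∏' n : ℕ, (if n = k then 1 else pseudoHyperbolicDist (lam n) (lam k))
  have hbdd : BddBelow (Set.range fun k : ℕ ↦
      ∏' n : ℕ, (if n = k then 1 else pseudoHyperbolicDist (lam n) (lam k))) :=
    ⟨0, by
      rintro _ ⟨k, rfl⟩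
      exact tprod_nonneg fun n ↦ by
        split_ifs
        exacts [zero_le_one, pseudoHyperbolicDist_nonneg _ _]⟩
  have hsep : HasPseudoHyperbolicSumBound lam (-2 * Real.log δ) :=
    hasPseudoHyperbolicSumBound_of_le_tprod h_up h_carleson fun k ↦ ciInf_le hbdd k
  have hM : 0 ≤ -2 * Real.log δ := by simpa using hsep 0 ∅ (notMem_empty 0)
  refine ⟨1 + 14 * (-2 * Real.log δ), by linarith, fun x h hh ↦ ?_⟩
  rw [ENNReal.tsum_eq_iSup_sum]
  refine iSup_le fun s ↦ ?_
  rw [← sum_filter, ← ENNReal.ofReal_sum_of_nonneg fun n _ ↦ (h_up n).le]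
  exact ENNReal.ofReal_le_ofReal <| hsep.sum_im_le_of_forall_mem_carlesonBox h_up hM _ hh.le
    fun n hn ↦ (mem_filter.1 hn).2
end
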